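/- Let H be a weak Hopf algebra, C a coalgebra, and ⊳ : H⊗C → C a linear map satisfying (MC1) 1_H⊳c = c, (MC2) Δ(h⊳c) = (h₁⊳c₁)⊗(h₂⊳c₂), and (MC3) h⊳(k⊳c) = hk⊳c, for all h,k ∈ H and c ∈ C. Then also (MC4) ε(h⊳c) = ε(ε_s(h)⊳c) holds for all h ∈ H and c ∈ C; that is, C is a left H-module coalgebra. -/

import Mathlib

open TensorProduct Coalgebra

noncomputable section

variable (k : Type*) [Field k]

section WeakHopfDefs

variable (H : Type*) [Ring H] [Algebra k H] [Coalgebra k H]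

/-- The target map `ε_t(h) = ε(1₁ h) 1₂` of a weak bialgebra. -/
def wεt (h : H) : H :=
  (TensorProduct.lid k H)
    ((TensorProduct.map (counit (R := k) ∘ₗ LinearMap.mulRight k h) (LinearMap.id))
      (comul (R := k) (1 : H)))

/-- The source map `ε_s(h) = 1₁ ε(h 1₂)` of a weak bialgebra. -/
def wεs (h : H) : H :=
  (TensorProduct.rid k H)
    ((TensorProduct.map (LinearMap.id) (counit (R := k) ∘ₗ LinearMap.mulLeft k h))
      (comul (R := k) (1 : H)))

/-- A weak Hopf algebra structure on an algebra `H` which is also a coalgebra: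
the weak bialgebra axioms together with an antipode `S`. -/
structure WeakHopf : Type _ where
  /-- Δ is multiplicative -/
  comul_mul : ∀ h g : H, comul (R := k) (h * g) = comul (R := k) h * comul (R := k) g
  /-- ε(hgl) = Σ ε(h g₁) ε(g₂ l) -/
  counit_weak_mul : ∀ h g l : H, counit (R := k) (h * g * l)
      = LinearMap.mul' k k
          ((TensorProduct.map (counit (R := k) ∘ₗ LinearMap.mulLeft k h)
              (counit (R := k) ∘ₗ LinearMap.mulRight k l)) (comul (R := k) g))
  /-- ε(hgl) = Σ ε(h g₂) ε(g₁ l) -/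
  counit_weak_mul' : ∀ h g l : H, counit (R := k) (h * g * l)
      = LinearMap.mul' k k
          ((TensorProduct.map (counit (R := k) ∘ₗ LinearMap.mulLeft k h)
              (counit (R := k) ∘ₗ LinearMap.mulRight k l))
            ((TensorProduct.comm k H H) (comul (R := k) g)))
  /-- (1 ⊗ Δ(1))(Δ(1) ⊗ 1) = Δ²(1) -/
  comul_one_left :
      ((1 : H) ⊗ₜ[k] comul (R := k) (1 : H))
          * ((TensorProduct.assoc k H H H) (comul (R := k) (1 : H) ⊗ₜ[k] (1 : H)))
        = (LinearMap.lTensor H (comul (R := k))) (comul (R := k) (1 : H))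
  /-- (Δ(1) ⊗ 1)(1 ⊗ Δ(1)) = Δ²(1) -/
  comul_one_right :
      ((TensorProduct.assoc k H H H) (comul (R := k) (1 : H) ⊗ₜ[k] (1 : H)))
          * ((1 : H) ⊗ₜ[k] comul (R := k) (1 : H))
        = (LinearMap.lTensor H (comul (R := k))) (comul (R := k) (1 : H))
  /-- the antipode -/
  S : H →ₗ[k] H
  /-- Σ h₁ S(h₂) = ε_t(h) -/
  antipode_t : ∀ h : H,
      LinearMap.mul' k H ((LinearMap.lTensor H S) (comul (R := k) h)) = wεt k H h
  /-- Σ S(h₁) h₂ = ε_s(h) -/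
  antipode_s : ∀ h : H,
      LinearMap.mul' k H ((LinearMap.rTensor H S) (comul (R := k) h)) = wεs k H h
  /-- Σ S(h₁) h₂ S(h₃) = S(h) -/
  antipode_mid : ∀ h : H,
      LinearMap.mul' k H
        ((TensorProduct.map S (LinearMap.mul' k H ∘ₗ LinearMap.lTensor H S))
          ((LinearMap.lTensor H (comul (R := k))) (comul (R := k) h))) = S h

end WeakHopfDefs

section Actions

variable (H : Type*) [Ring H] [Algebra k H] [Coalgebra k H]
variable (C : Type*) [AddCommGroup C] [Module k C] [Coalgebra k C]

/-- The Sweedler sum `Σ (h g₁ · c₁) ε(g₂ · c₂)` appearing in (PMC3). -/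
def pmc3RHS (act : H →ₗ[k] C →ₗ[k] C) (h g : H) (c : C) : C :=
  (TensorProduct.rid k C)
    ((TensorProduct.map
        ((TensorProduct.lift act) ∘ₗ (LinearMap.rTensor C (LinearMap.mulLeft k h)))
        (counit (R := k) ∘ₗ (TensorProduct.lift act)))
      ((TensorProduct.tensorTensorTensorComm k H H C C)
        (comul (R := k) g ⊗ₜ[k] comul (R := k) c)))

/-- The Sweedler sum `Σ ε(g₁ · c₁) (h g₂ · c₂)` appearing in the symmetry condition. -/
def pmc3symRHS (act : H →ₗ[k] C →ₗ[k] C) (h g : H) (c : C) : C :=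
  (TensorProduct.lid k C)
    ((TensorProduct.map
        (counit (R := k) ∘ₗ (TensorProduct.lift act))
        ((TensorProduct.lift act) ∘ₗ (LinearMap.rTensor C (LinearMap.mulLeft k h))))
      ((TensorProduct.tensorTensorTensorComm k H H C C)
        (comul (R := k) g ⊗ₜ[k] comul (R := k) c)))

/-- (MC2)/(PMC2): `Δ(h·c) = (h₁·c₁) ⊗ (h₂·c₂)`. -/
def SweedlerComulCompat (act : H →ₗ[k] C →ₗ[k] C) : Prop :=
  ∀ (h : H) (c : C),
    comul (R := k) (act h c)
      = (TensorProduct.map (TensorProduct.lift act) (TensorProduct.lift act))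
          ((TensorProduct.tensorTensorTensorComm k H H C C)
            (comul (R := k) h ⊗ₜ[k] comul (R := k) c))

/-- `C` is a left partial `H`-module coalgebra via `act` (`act h c = h · c`). -/
structure IsPartialModuleCoalgebra (act : H →ₗ[k] C →ₗ[k] C) : Prop where
  pmc1 : ∀ c : C, act 1 c = c
  pmc2 : SweedlerComulCompat k H C act
  pmc3 : ∀ (h g : H) (c : C), act h (act g c) = pmc3RHS k H C act h g c

/-- `C` is a symmetric left partial `H`-module coalgebra via `act`. -/
structure IsSymmetricPartialModuleCoalgebra (act : H →ₗ[k] C →ₗ[k] C)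
    extends IsPartialModuleCoalgebra k H C act : Prop where
  pmc3sym : ∀ (h g : H) (c : C), act h (act g c) = pmc3symRHS k H C act h g c

/-- `C` is a left `H`-module coalgebra via `act`. -/
structure IsModuleCoalgebra (act : H →ₗ[k] C →ₗ[k] C) : Prop where
  mc1 : ∀ c : C, act 1 c = c
  mc2 : SweedlerComulCompat k H C act
  mc3 : ∀ (h g : H) (c : C), act h (act g c) = act (h * g) c
  mc4 : ∀ (h : H) (c : C), counit (R := k) (act h c) = counit (R := k) (act (wεs k H h) c)

end Actions

end

/-!
Write `ω_c(x ⊗ y) = ε(x ⊳ c₁) ε(y ⊳ c₂)`. Expanding `y ⊳ c` through the counit of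
`Δ(y ⊳ c) = (y₁ ⊳ c₁) ⊗ (y₂ ⊳ c₂)` and then using (MC3) gives
`ε(x ⊳ (y ⊳ c)) = ω_c(y₁ ⊗ x y₂) = ω_c(x y₁ ⊗ y₂)`. With `c = 1 ⊳ c` the first form yields
`ε(h ⊳ c) = ω_c(1₁ ⊗ h 1₂)`; with `ε_s(h) = S(h₁) h₂` the second yields
`ε(ε_s(h) ⊳ c) = ω_c(S(h₁) h₂ ⊗ h₃) = ω_c(ε_s(h₁) ⊗ h₂)`. These agree by the weak bialgebra
identity `ε_s(h₁) ⊗ h₂ = 1₁ ⊗ h 1₂`.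
-/

lemma Coalgebra.sum_counit_right_smul_left {R A ι : Type*} [CommSemiring R] [AddCommMonoid A]
    [Module R A] [Coalgebra R A] {a : A} (𝓡 : Repr R a ι) :
    ∑ i ∈ 𝓡.index, counit (R := R) (𝓡.right i) • 𝓡.left i = a := by
  simpa only [map_sum, rid_tmul, one_smul] using
    congrArg (_root_.TensorProduct.rid R A) (sum_tmul_counit_eq 𝓡)

section CounitMulLeft

variable {k H : Type*} [CommSemiring k] [Semiring H] [Algebra k H] [Coalgebra k H]

/-- `y ⊗ z ↦ ε(h₁ y) h₂ z`. -/
noncomputable def counitMulLeft (h : H) : H ⊗[k] H →ₗ[k] H :=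
  (TensorProduct.lid k H).toLinearMap ∘ₗ (counit (R := k)).rTensor H ∘ₗ
    LinearMap.mulLeft k (comul (R := k) h)

variable (hmul : ∀ h g : H, comul (R := k) (h * g) = comul (R := k) h * comul (R := k) g)
include hmul

lemma counitMulLeft_comul (h g : H) : counitMulLeft h (comul (R := k) g) = h * g := by
  simp [counitMulLeft, ← hmul]

lemma counitMulLeft_comul_one_mul (h : H) (t : H ⊗[k] H) :
    counitMulLeft h (comul (R := k) 1 * t) = counitMulLeft h t := by
  simp [counitMulLeft, ← mul_assoc, ← hmul]

lemma lTensor_counitMulLeft_one_tmul_comul_one_mul (h : H) (X : H ⊗[k] (H ⊗[k] H)) :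
    (counitMulLeft h).lTensor H (((1 : H) ⊗ₜ[k] comul (R := k) 1) * X)
      = (counitMulLeft h).lTensor H X := by
  induction X using TensorProduct.induction_on with
  | zero => simp
  | tmul a t => simp [counitMulLeft_comul_one_mul hmul]
  | add X Y hX hY => simp only [mul_add, map_add, hX, hY]

end CounitMulLeft

section SourceMap

variable {k H : Type*} [Field k] [Ring H] [Algebra k H] [Coalgebra k H]

variable (k H) in
noncomputable def wεsₗ : H →ₗ[k] H where
  toFun := wεs k H
  map_add' x y := by
    have : LinearMap.mulLeft k (x + y) = LinearMap.mulLeft k x + LinearMap.mulLeft k y :=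
      LinearMap.ext fun _ => add_mul _ _ _
    simp [wεs, this, LinearMap.comp_add, TensorProduct.map_add_right]
  map_smul' r x := by
    have : LinearMap.mulLeft k (r • x) = r • LinearMap.mulLeft k x :=
      LinearMap.ext fun _ => smul_mul_assoc _ _ _
    simp [wεs, this, LinearMap.comp_smul, TensorProduct.map_smul_right]

@[simp] lemma wεsₗ_apply (x : H) : wεsₗ k H x = wεs k H x := rfl

lemma wεs_eq_sum {ι : Type*} (𝓡 : Repr k (1 : H) ι) (x : H) :
    wεs k H x = ∑ i ∈ 𝓡.index, counit (R := k) (x * 𝓡.right i) • 𝓡.left i := by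
  simp [wεs, ← 𝓡.eq, map_sum]

lemma lTensor_counitMulLeft_assoc_comul_one (h : H) :
    (counitMulLeft h).lTensor H (TensorProduct.assoc k H H H (comul (R := k) 1 ⊗ₜ[k] 1))
      = (wεsₗ k H).rTensor H (comul (R := k) h) := by
  simp only [counitMulLeft, ← (ℛ k (1 : H)).eq, ← (ℛ k h).eq]
  simp only [map_sum, sum_tmul, assoc_tmul, LinearMap.lTensor_tmul, LinearMap.rTensor_tmul,
    LinearMap.coe_comp, LinearEquiv.coe_coe, Function.comp_apply, LinearMap.mulLeft_apply,
    Finset.sum_mul, Algebra.TensorProduct.tmul_mul_tmul, mul_one, lid_tmul, tmul_sum, wεsₗ_apply,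
    wεs_eq_sum (ℛ k 1), smul_tmul]
  exact Finset.sum_comm

lemma rTensor_wεsₗ_comul
    (hmul : ∀ h g : H, comul (R := k) (h * g) = comul (R := k) h * comul (R := k) g)
    (hone : ((1 : H) ⊗ₜ[k] comul (R := k) (1 : H))
        * ((TensorProduct.assoc k H H H) (comul (R := k) (1 : H) ⊗ₜ[k] (1 : H)))
      = (LinearMap.lTensor H (comul (R := k))) (comul (R := k) (1 : H))) (h : H) :
    (wεsₗ k H).rTensor H (comul (R := k) h)
      = (LinearMap.mulLeft k h).lTensor H (comul (R := k) 1) := by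
  have hψ : counitMulLeft h ∘ₗ comul = LinearMap.mulLeft k h :=
    LinearMap.ext (counitMulLeft_comul hmul h)
  -- Apply `id ⊗ counitMulLeft h` to `hone`; it absorbs the left factor `1 ⊗ Δ1` since `h * 1 = h`.
  rw [← lTensor_counitMulLeft_assoc_comul_one, ← lTensor_counitMulLeft_one_tmul_comul_one_mul hmul,
    hone, ← LinearMap.lTensor_comp_apply, hψ]

lemma WeakHopf.sum_rTensor_mulLeft_antipode_comul (wh : WeakHopf k H) {h : H} {ι : Type*}
    (𝓡 : Repr k h ι) :
    ∑ j ∈ 𝓡.index, (LinearMap.mulLeft k (wh.S (𝓡.left j))).rTensor H (comul (R := k) (𝓡.right j))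
      = (wεsₗ k H).rTensor H (comul (R := k) h) := by
  have hεs : wεsₗ k H = LinearMap.mul' k H ∘ₗ wh.S.rTensor H ∘ₗ comul :=
    LinearMap.ext fun x => (wh.antipode_s x).symm
  rw [hεs, LinearMap.rTensor_comp_apply, LinearMap.rTensor_comp_apply, ← coassoc_symm_apply,
    ← 𝓡.eq]
  simp only [map_sum, LinearMap.lTensor_tmul]
  refine Finset.sum_congr rfl fun j _ => ?_
  rw [← (ℛ k (𝓡.right j)).eq]
  simp [map_sum, tmul_sum]

end SourceMap

section CounitPairing

variable {k H C : Type*} [CommSemiring k] [AddCommMonoid H] [Module k H]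
  [AddCommMonoid C] [Module k C] [Coalgebra k C] (act : H →ₗ[k] C →ₗ[k] C)

noncomputable def counitPairing (c : C) : H ⊗[k] H →ₗ[k] k :=
  counit (R := k) (A := C ⊗[k] C) ∘ₗ map (lift act) (lift act) ∘ₗ
    (tensorTensorTensorComm k H H C C).toLinearMap ∘ₗ (TensorProduct.mk k _ _).flip (comul c)

lemma counitPairing_tmul {c : C} {κ : Type*} (𝓡 : Repr k c κ) (x y : H) :
    counitPairing act c (x ⊗ₜ y)
      = ∑ p ∈ 𝓡.index, counit (R := k) (act x (𝓡.left p)) * counit (R := k) (act y (𝓡.right p)) := by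
  simp [counitPairing, ← 𝓡.eq, map_sum, mul_comm]

end CounitPairing

namespace SweedlerComulCompat

variable {k H C : Type*} [Field k] [Ring H] [Algebra k H] [Coalgebra k H]
  [AddCommGroup C] [Module k C] [Coalgebra k C] {act : H →ₗ[k] C →ₗ[k] C}
  (mc2 : SweedlerComulCompat k H C act)
include mc2

noncomputable def repr {h : H} {c : C} {ι κ : Type*} (𝓡h : Repr k h ι) (𝓡c : Repr k c κ) :
    Repr k (act h c) (ι × κ) where
  index := 𝓡h.index ×ˢ 𝓡c.index
  left q := act (𝓡h.left q.1) (𝓡c.left q.2)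
  right q := act (𝓡h.right q.1) (𝓡c.right q.2)
  eq := by
    rw [mc2, ← 𝓡h.eq, ← 𝓡c.eq, Finset.sum_product]
    simp only [tmul_sum, sum_tmul, map_sum, tensorTensorTensorComm_tmul, map_tmul, lift.tmul]
    exact Finset.sum_comm

variable (mc3 : ∀ (h g : H) (c : C), act h (act g c) = act (h * g) c)
include mc3

lemma counit_act_act_eq_counitPairing_lTensor (x y : H) (c : C) :
    counit (R := k) (act x (act y c))
      = counitPairing act c ((LinearMap.mulLeft k x).lTensor H (comul (R := k) y)) := by
  rw [← sum_counit_smul (mc2.repr (ℛ k y) (ℛ k c)), ← (ℛ k y).eq]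
  simp [repr, Finset.sum_product, map_sum, mc3, counitPairing_tmul act (ℛ k c)]

lemma counit_act_act_eq_counitPairing_rTensor (x y : H) (c : C) :
    counit (R := k) (act x (act y c))
      = counitPairing act c ((LinearMap.mulLeft k x).rTensor H (comul (R := k) y)) := by
  rw [← sum_counit_right_smul_left (mc2.repr (ℛ k y) (ℛ k c)), ← (ℛ k y).eq]
  simp [repr, Finset.sum_product, map_sum, mc3, counitPairing_tmul act (ℛ k c), mul_comm]

end SweedlerComulCompat

theorem mc4_of_mc1_mc2_mc3
    (k : Type*) [Field k] (H : Type*) [Ring H] [Algebra k H] [Coalgebra k H]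
    (C : Type*) [AddCommGroup C] [Module k C] [Coalgebra k C]
    (wh : WeakHopf k H) (act : H →ₗ[k] C →ₗ[k] C)
    (mc1 : ∀ c : C, act 1 c = c)
    (mc2 : SweedlerComulCompat k H C act)
    (mc3 : ∀ (h g : H) (c : C), act h (act g c) = act (h * g) c) :
    (∀ (h : H) (c : C),
        counit (R := k) (act h c) = counit (R := k) (act (wεs k H h) c)) ∧
      IsModuleCoalgebra k H C act := by
  have mc4 (h : H) (c : C) : counit (R := k) (act h c) = counit (R := k) (act (wεs k H h) c) := by
    let 𝓡 := ℛ k h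
    calc counit (R := k) (act h c)
        = counit (R := k) (act h (act 1 c)) := by rw [mc1]
      _ = counitPairing act c ((LinearMap.mulLeft k h).lTensor H (comul (R := k) 1)) :=
          mc2.counit_act_act_eq_counitPairing_lTensor mc3 h 1 c
      _ = counitPairing act c ((wεsₗ k H).rTensor H (comul (R := k) h)) := by
          rw [rTensor_wεsₗ_comul wh.comul_mul wh.comul_one_left]
      _ = ∑ j ∈ 𝓡.index, counit (R := k) (act (wh.S (𝓡.left j)) (act (𝓡.right j) c)) := by
          simp only [← wh.sum_rTensor_mulLeft_antipode_comul 𝓡, map_sum,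
            mc2.counit_act_act_eq_counitPairing_rTensor mc3]
      _ = counit (R := k) (act (wεs k H h) c) := by
          rw [← wh.antipode_s, ← 𝓡.eq]
          simp [map_sum, mc3]
  exact ⟨mc4, mc1, mc2, mc3, mc4⟩
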